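/- arXiv:1509.08139 — 3 statements merged into one kernel-verified Lean document; each statement's English description precedes it below -/
import Mathlib

section
/- Let n ≥ 2 be an integer, t ∈ ℝ, k ∈ ℤ₀, C₀ > 0, and let v : ℤ₀ → ℂ satisfy (Σ_{m∈ℤ₀}|v_m|²)^{1/2} ≤ C₀. Then the sum Σ_{k₁+⋯+k_n=k, k_j∈ℤ₀} |Φ_n(k₁,…,k_n)| ∏_{j=1}^n |v_{k_j}|/|k_j| converges, and |I^n_k(t)(v)| ≤ |k| · Z_{0,2}^{n−2} C₀^n / (2^{n−1}(n−2)!), where Z_{0,2} := (π²/3)^{1/2}. In particular, for fixed k, I^n_k(t)(v) → 0 as n → ∞, uniformly in t and uniformly over v in the C₀-ball of ℓ²(ℤ₀). -/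
noncomputable section

open scoped BigOperators
open Complex

/-- `ℤ₀ = ℤ ∖ {0}`. -/
abbrev Z0 : Type := {k : ℤ // k ≠ 0}

/-- negation on `ℤ₀`. -/
def negZ0 (m : Z0) : Z0 := ⟨-m.1, neg_ne_zero.mpr m.2⟩

/-- summand of the `FL^{s,p}` norm. -/
def FLsummand (s p : ℝ) (v : Z0 → ℂ) (k : Z0) : ℝ :=
  (|(k.1 : ℝ)| ^ s * ‖v k‖) ^ p

/-- the Fourier–Lebesgue norm. -/
def FLnorm (s p : ℝ) (v : Z0 → ℂ) : ℝ :=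
  (∑' k : Z0, FLsummand s p v k) ^ (1 / p)

/-- modulation function. -/
def Phi (n : ℕ) (a : Fin n → ℤ) : ℤ := (∑ j, a j) ^ 2 - ∑ j, (a j) ^ 2

/-- tuples of nonzero frequencies summing to `k`. -/
def Tup (n : ℕ) (k : Z0) : Type := {a : Fin n → Z0 // (∑ j, (a j).1) = k.1}

/-- the multilinear form `N^n_k(t)(v)`. -/
def Ncoef (n : ℕ) (k : Z0) (t : ℝ) (v : Z0 → ℂ) : ℂ :=
  ((-1 : ℂ) ^ n * (k.1 : ℂ) / (2 ^ (n - 1) * (Nat.factorial n : ℂ))) *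
    ∑' a : Tup n k,
      Complex.exp (Complex.I * ((Phi n fun j => (a.1 j).1 : ℤ) : ℂ) * (t : ℂ)) *
        ∏ j, v (a.1 j) / ((a.1 j).1 : ℂ)

/-- the multilinear form `I^n_k(t)(v)`. -/
def Icoef (n : ℕ) (k : Z0) (t : ℝ) (v : Z0 → ℂ) : ℂ :=
  ((-1 : ℂ) ^ n * (k.1 : ℂ) / (2 ^ (n - 1) * (Nat.factorial n : ℂ))) *
    ∑' a : Tup n k,
      Complex.I * ((Phi n fun j => (a.1 j).1 : ℤ) : ℂ) *
        Complex.exp (Complex.I * ((Phi n fun j => (a.1 j).1 : ℤ) : ℂ) * (t : ℂ)) *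
        ∏ j, v (a.1 j) / ((a.1 j).1 : ℂ)

/-- the correction term `R^n_k(t)(v)`. -/
def Rcoef (n : ℕ) (k : Z0) (t : ℝ) (v : Z0 → ℂ) : ℂ :=
  (-(Complex.I / 4)) *
    (∑' m : Z0, Complex.exp (-2 * Complex.I * ((m.1 : ℂ)) ^ 2 * (t : ℂ)) * v m * v (negZ0 m)) *
    Ncoef (n - 1) k t v

/-- pairs of nonzero frequencies summing to `k`. -/
def Pair (k : Z0) : Type := {q : Z0 × Z0 // q.1.1 + q.2.1 = k.1}

/-- right-hand side of the Fourier-side quadratic derivative NLS. -/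
def dnlsRHS (u : Z0 → ℂ) (k : Z0) : ℂ :=
  -Complex.I * (k.1 : ℂ) ^ 2 * u k +
    (Complex.I * (k.1 : ℂ) / 2) * ∑' q : Pair k, u q.1.1 * u q.1.2

/-- `u` solves the Fourier-side quadratic derivative NLS on `S`, with absolutely converging
nonlinearity. -/
def SolvesDNLS (u : ℝ → Z0 → ℂ) (S : Set ℝ) : Prop :=
  ∀ k : Z0, ∀ t ∈ S,
    Summable (fun q : Pair k => ‖u t q.1.1 * u t q.1.2‖) ∧
    HasDerivAt (fun τ => u τ k) (dnlsRHS (u t) k) t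

/-- continuity of `t ↦ (|k|^s u_k(t))_k` as a map into `ℓ^p(ℤ₀)`. -/
def FLcontOn (s p : ℝ) (u : ℝ → Z0 → ℂ) (S : Set ℝ) : Prop :=
  (∀ t ∈ S, Summable (FLsummand s p (u t))) ∧
  ∀ t₀ ∈ S, ∀ ε > 0, ∃ δ > 0, ∀ t ∈ S, |t - t₀| < δ →
    FLnorm s p (fun k => u t k - u t₀ k) < ε

/-- interaction representation `v_k(t) = e^{ik²t} u_k(t)`. -/
def interRep (u : ℝ → Z0 → ℂ) (t : ℝ) (k : Z0) : ℂ :=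
  Complex.exp (Complex.I * (k.1 : ℂ) ^ 2 * (t : ℂ)) * u t k

/-!
Expanding the square, `Φ_n(a) = ∑_{i ≠ j} a_i a_j`, so `|Φ_n(a)| ∏_l |v_{a_l}| / |a_l|` is at
most a sum over the `n (n - 1)` ordered pairs `i ≠ j` of products whose factors are `|v_{a_l}|` for
`l ∈ {i, j}` and `|v_{a_l}| / |a_l|` otherwise. Summing such a product over `a_1 + ⋯ + a_n = k`,
each of the `n - 2` free frequencies contributes `∑_m |v_m| / |m| ≤ Z_{0,2} ‖v‖₂` (Cauchy–Schwarz
and `∑_{m ≠ 0} m⁻² = π² / 3`), and the remaining pair a convolution `∑_x |v_x| |v_{s - x}| ≤ ‖v‖₂²`.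
Hence the absolute series is at most `n (n - 1) Z_{0,2}^{n-2} ‖v‖₂^n`, and
`n (n - 1) / n! = 1 / (n - 2)!`. The tuple sums are estimated in `ℝ≥0∞`, where they can be rearranged without summability side
conditions.
-/

open scoped ENNReal
open Real

-- The `x = 0` term vanishes since `0⁻¹ = 0` in Lean.
theorem hasSum_inv_abs_sq_int : HasSum (fun x : ℤ => |(x : ℝ)|⁻¹ ^ 2) (π ^ 2 / 3) := by
  have h : HasSum (fun n : ℕ => |(((n + 1 : ℕ) : ℤ) : ℝ)|⁻¹ ^ 2) (π ^ 2 / 6) := by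
    simpa [Finset.sum_range_one] using (hasSum_nat_add_iff' 1).mpr hasSum_zeta_two
  have h' : HasSum (fun n : ℕ => |((-(n + 1 : ℤ) : ℤ) : ℝ)|⁻¹ ^ 2) (π ^ 2 / 6) := by
    simpa only [Int.cast_neg, abs_neg, Nat.cast_succ] using h
  convert HasSum.of_add_one_of_neg_add_one (f := fun x : ℤ => |(x : ℝ)|⁻¹ ^ 2) h h' using 1
  simp; ring

theorem summable_and_tsum_mul_le_sqrt_mul_sqrt {ι : Type*} {f g : ι → ℝ} (hf : ∀ i, 0 ≤ f i)
    (hg : ∀ i, 0 ≤ g i) (hf2 : Summable fun i => f i ^ 2) (hg2 : Summable fun i => g i ^ 2) :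
    Summable (fun i => f i * g i) ∧
      ∑' i, f i * g i ≤ √(∑' i, f i ^ 2) * √(∑' i, g i ^ 2) := by
  simp only [← Real.rpow_natCast, Nat.cast_ofNat] at hf2 hg2 ⊢
  simpa only [Real.sqrt_eq_rpow, one_div] using
    Real.summable_and_inner_le_Lp_mul_Lq_tsum_of_nonneg .two_two hf hg hf2 hg2

theorem summable_and_tsum_mul_sub_le {G : Type*} [AddCommGroup G] {u : G → ℝ}
    (hu : ∀ x, 0 ≤ u x) (hu2 : Summable fun x => u x ^ 2) (t : G) :
    Summable (fun x => u x * u (t - x)) ∧ ∑' x, u x * u (t - x) ≤ ∑' x, u x ^ 2 := by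
  have hshift2 : Summable (fun x => u (t - x) ^ 2) :=
    (Equiv.subLeft t).summable_iff.mpr hu2
  have hshift : ∑' x, u (t - x) ^ 2 = ∑' x, u x ^ 2 := (Equiv.subLeft t).tsum_eq (u · ^ 2)
  obtain ⟨hs, hle⟩ := summable_and_tsum_mul_le_sqrt_mul_sqrt hu (fun x => hu (t - x)) hu2 hshift2
  refine ⟨hs, hle.trans_eq ?_⟩
  rw [hshift, Real.mul_self_sqrt (tsum_nonneg fun x => sq_nonneg _)]

theorem summable_and_tsum_mul_inv_abs_le {u : ℤ → ℝ} (hu : ∀ x, 0 ≤ u x)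
    (hu2 : Summable fun x => u x ^ 2) :
    Summable (fun x : ℤ => u x * |(x : ℝ)|⁻¹) ∧
      ∑' x : ℤ, u x * |(x : ℝ)|⁻¹ ≤ √(∑' x, u x ^ 2) * √(π ^ 2 / 3) := by
  simpa only [hasSum_inv_abs_sq_int.tsum_eq] using summable_and_tsum_mul_le_sqrt_mul_sqrt hu
    (fun x => inv_nonneg.mpr (abs_nonneg _)) hu2 hasSum_inv_abs_sq_int.summable

theorem tsum_pi_prod_eq_prod_tsum {α : Type*} :
    ∀ {m : ℕ} (f : Fin m → α → ℝ≥0∞), ∑' d : Fin m → α, ∏ r, f r (d r) = ∏ r, ∑' x, f r x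
  | 0, f => by simp
  | m + 1, f => by
    rw [← (Fin.consEquiv fun _ => α).tsum_eq, ENNReal.tsum_prod', Fin.prod_univ_succ,
      ← tsum_pi_prod_eq_prod_tsum (fun r => f r.succ), ← ENNReal.tsum_mul_right]
    simp [Fin.prod_univ_succ, ENNReal.tsum_mul_left]

section SumEq

variable {G : Type*} [AddCommGroup G]

def sumEqEquivProd (m : ℕ) (s : G) : {a : Fin (m + 2) → G // ∑ l, a l = s} ≃ G × (Fin m → G) where
  toFun a := (a.1 0, fun r => a.1 r.succ.succ)
  invFun p := ⟨Fin.cons p.1 (Fin.cons (s - p.1 - ∑ r, p.2 r) p.2), by simp [Fin.sum_univ_succ]⟩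
  left_inv a := by
    ext l
    refine Fin.cases rfl (Fin.cases ?_ fun r => rfl) l
    have := a.2
    simp only [Fin.sum_univ_succ] at this
    simp [← this]
  right_inv p := by simp

theorem tsum_sumEq_comp_perm {ι M : Type*} [Fintype ι] [AddCommMonoid M] [TopologicalSpace M]
    (σ : Equiv.Perm ι) (s : G) (f : (ι → G) → M) :
    ∑' a : {a : ι → G // ∑ l, a l = s}, f (a.1 ∘ σ) = ∑' a : {a : ι → G // ∑ l, a l = s}, f a.1 :=
  (Equiv.subtypeEquiv (σ.symm.arrowCongr (Equiv.refl G))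
    fun a => by simp [Equiv.sum_comp σ a]).tsum_eq (f ·.1)

theorem exists_perm_apply_zero_apply_one {m : ℕ} {i j : Fin (m + 2)} (hij : i ≠ j) :
    ∃ σ : Equiv.Perm (Fin (m + 2)), σ 0 = i ∧ σ 1 = j := by
  refine ⟨Equiv.swap 1 (Equiv.swap 0 i j) |>.trans (Equiv.swap 0 i), ?_, by simp⟩
  have : Equiv.swap 0 i j ≠ 0 := by
    rw [Ne, Equiv.swap_apply_eq_iff, Equiv.swap_apply_left]; exact hij.symm
  simp [Equiv.swap_apply_of_ne_of_ne Fin.zero_ne_one this.symm]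

theorem tsum_sumEq_prod_le_of_zero_one {m : ℕ} (s : G) (F : Fin (m + 2) → G → ℝ≥0∞) {A B : ℝ≥0∞}
    (hA : ∀ t, ∑' x, F 0 x * F 1 (t - x) ≤ A) (hB : ∀ r : Fin m, ∑' x, F r.succ.succ x ≤ B) :
    ∑' a : {a : Fin (m + 2) → G // ∑ l, a l = s}, ∏ l, F l (a.1 l) ≤ A * B ^ m := by
  rw [← (sumEqEquivProd m s).symm.tsum_eq, ENNReal.tsum_prod', ENNReal.tsum_comm]
  calc ∑' (d : Fin m → G) (y : G), ∏ l, F l (((sumEqEquivProd m s).symm (y, d)).1 l)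
      = ∑' d : Fin m → G, (∑' y, F 0 y * F 1 (s - ∑ r, d r - y)) * ∏ r, F r.succ.succ (d r) := by
        refine tsum_congr fun d => ?_
        rw [← ENNReal.tsum_mul_right]
        refine tsum_congr fun y => ?_
        simp [sumEqEquivProd, Fin.prod_univ_succ, sub_right_comm s y, mul_assoc]
    _ ≤ ∑' d : Fin m → G, A * ∏ r, F r.succ.succ (d r) :=
        ENNReal.tsum_le_tsum fun d => mul_le_mul_left (hA _) _
    _ ≤ A * B ^ m := by
        rw [ENNReal.tsum_mul_left, tsum_pi_prod_eq_prod_tsum]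
        gcongr
        simpa using Finset.prod_le_pow_card Finset.univ _ B fun r _ => hB r

theorem tsum_sumEq_prod_le {m : ℕ} (s : G) (F : Fin (m + 2) → G → ℝ≥0∞) {i j : Fin (m + 2)}
    (hij : i ≠ j) {A B : ℝ≥0∞} (hA : ∀ t, ∑' x, F i x * F j (t - x) ≤ A)
    (hB : ∀ l, l ≠ i → l ≠ j → ∑' x, F l x ≤ B) :
    ∑' a : {a : Fin (m + 2) → G // ∑ l, a l = s}, ∏ l, F l (a.1 l) ≤ A * B ^ m := by
  obtain ⟨σ, rfl, rfl⟩ := exists_perm_apply_zero_apply_one hij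
  have hperm (a : Fin (m + 2) → G) : ∏ l, F l ((a ∘ σ.symm) l) = ∏ l, F (σ l) (a l) := by
    simpa using (Equiv.prod_comp σ fun l => F l (a (σ.symm l))).symm
  rw [← tsum_sumEq_comp_perm σ.symm s (fun a => ∏ l, F l (a l))]
  simp only [hperm]
  refine tsum_sumEq_prod_le_of_zero_one s (fun l => F (σ l)) hA fun r => hB _ ?_ ?_
  · exact σ.injective.ne (Fin.succ_ne_zero _)
  · exact σ.injective.ne (Fin.succ_injective _ |>.ne (Fin.succ_ne_zero r))

end SumEq

theorem Phi_eq_sum_offDiag (n : ℕ) (a : Fin n → ℤ) :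
    Phi n a = ∑ p ∈ Finset.univ.offDiag, a p.1 * a p.2 := by
  rw [Phi, sq, Finset.sum_mul_sum, ← Finset.sum_product', ← Finset.diag_union_offDiag,
    Finset.sum_union (Finset.disjoint_diag_offDiag _), Finset.sum_diag]
  simp [sq]

theorem abs_mul_abs_mul_prod_eq {n : ℕ} {u : ℤ → ℝ} (hu0 : u 0 = 0) (a : Fin n → ℤ)
    {i j : Fin n} (hij : i ≠ j) :
    |(a i : ℝ)| * |(a j : ℝ)| * ∏ l, u (a l) * |(a l : ℝ)|⁻¹ =
      ∏ l, if l ∈ ({i, j} : Finset _) then u (a l) else u (a l) * |(a l : ℝ)|⁻¹ := by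
  have hcancel (x : ℤ) : |(x : ℝ)| * (u x * |(x : ℝ)|⁻¹) = u x := by
    rcases eq_or_ne x 0 with rfl | hx
    · simp [hu0]
    · field_simp [hx]
  rw [← Finset.prod_pair (f := fun l => |(a l : ℝ)|) hij, ← Finset.univ_inter {i, j},
    ← Finset.prod_ite_mem, ← Finset.prod_mul_distrib]
  refine Finset.prod_congr rfl fun l _ => ?_
  by_cases hl : l ∈ ({i, j} : Finset _) <;> simp [hl, hcancel]

theorem abs_Phi_mul_prod_le {n : ℕ} {u : ℤ → ℝ} (hu : ∀ x, 0 ≤ u x) (hu0 : u 0 = 0)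
    (a : Fin n → ℤ) :
    |(Phi n a : ℝ)| * ∏ l, u (a l) * |(a l : ℝ)|⁻¹ ≤ ∑ p ∈ Finset.univ.offDiag,
      ∏ l, if l ∈ ({p.1, p.2} : Finset _) then u (a l) else u (a l) * |(a l : ℝ)|⁻¹ := by
  have hprod : 0 ≤ ∏ l, u (a l) * |(a l : ℝ)|⁻¹ :=
    Finset.prod_nonneg fun l _ => mul_nonneg (hu _) (inv_nonneg.mpr (abs_nonneg _))
  calc |(Phi n a : ℝ)| * ∏ l, u (a l) * |(a l : ℝ)|⁻¹
      ≤ (∑ p ∈ Finset.univ.offDiag, |(a p.1 : ℝ)| * |(a p.2 : ℝ)|) *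
          ∏ l, u (a l) * |(a l : ℝ)|⁻¹ := by
        gcongr
        rw [Phi_eq_sum_offDiag]
        push_cast
        simpa only [abs_mul] using
          Finset.abs_sum_le_sum_abs (fun p : Fin n × Fin n => (a p.1 : ℝ) * a p.2) _
    _ = _ := by
        rw [Finset.sum_mul]
        exact Finset.sum_congr rfl fun p hp =>
          abs_mul_abs_mul_prod_eq hu0 a (Finset.mem_offDiag.mp hp).2.2

theorem tsum_ofReal_abs_Phi_mul_prod_le {u : ℤ → ℝ} (hu : ∀ x, 0 ≤ u x) (hu0 : u 0 = 0)
    (hu2 : Summable fun x => u x ^ 2) (m : ℕ) (s : ℤ) :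
    ∑' a : {a : Fin (m + 2) → ℤ // ∑ l, a l = s},
        ENNReal.ofReal (|(Phi (m + 2) a.1 : ℝ)| * ∏ l, u (a.1 l) * |(a.1 l : ℝ)|⁻¹) ≤
      ENNReal.ofReal ((m + 2) * (m + 1) * √(π ^ 2 / 3) ^ m * √(∑' x, u x ^ 2) ^ (m + 2)) := by
  set N := √(∑' x, u x ^ 2)
  set Z := √(π ^ 2 / 3)
  have hw (x : ℤ) : 0 ≤ u x * |(x : ℝ)|⁻¹ := mul_nonneg (hu x) (inv_nonneg.mpr (abs_nonneg _))
  let F (p : Fin (m + 2) × Fin (m + 2)) (l : Fin (m + 2)) (x : ℤ) : ℝ≥0∞ :=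
    ENNReal.ofReal (if l ∈ ({p.1, p.2} : Finset _) then u x else u x * |(x : ℝ)|⁻¹)
  have hA (t : ℤ) :
      ∑' x, ENNReal.ofReal (u x) * ENNReal.ofReal (u (t - x)) ≤ ENNReal.ofReal (N ^ 2) := by
    obtain ⟨hs, hle⟩ := summable_and_tsum_mul_sub_le hu hu2 t
    simp only [← ENNReal.ofReal_mul (hu _)]
    rw [← ENNReal.ofReal_tsum_of_nonneg (fun x => mul_nonneg (hu x) (hu _)) hs]
    exact ENNReal.ofReal_le_ofReal
      (hle.trans_eq (Real.sq_sqrt (tsum_nonneg fun x => sq_nonneg _)).symm)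
  have hB : ∑' x : ℤ, ENNReal.ofReal (u x * |(x : ℝ)|⁻¹) ≤ ENNReal.ofReal (Z * N) := by
    obtain ⟨hs, hle⟩ := summable_and_tsum_mul_inv_abs_le hu hu2
    rw [← ENNReal.ofReal_tsum_of_nonneg hw hs, mul_comm Z]
    exact ENNReal.ofReal_le_ofReal hle
  calc ∑' a : {a : Fin (m + 2) → ℤ // ∑ l, a l = s},
        ENNReal.ofReal (|(Phi (m + 2) a.1 : ℝ)| * ∏ l, u (a.1 l) * |(a.1 l : ℝ)|⁻¹)
      ≤ ∑' a : {a : Fin (m + 2) → ℤ // ∑ l, a l = s},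
          ∑ p ∈ Finset.univ.offDiag, ∏ l, F p l (a.1 l) := by
        refine ENNReal.tsum_le_tsum fun a => (ENNReal.ofReal_le_ofReal
          (abs_Phi_mul_prod_le hu hu0 a.1)).trans_eq ?_
        rw [ENNReal.ofReal_sum_of_nonneg fun p _ => Finset.prod_nonneg fun l _ => ?_]
        · exact Finset.sum_congr rfl fun p _ => ENNReal.ofReal_prod_of_nonneg fun l _ => by
            split_ifs <;> simp [hu, hw]
        · split_ifs <;> simp [hu, hw]
    _ = ∑ p ∈ Finset.univ.offDiag, ∑' a : {a : Fin (m + 2) → ℤ // ∑ l, a l = s},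
          ∏ l, F p l (a.1 l) := Summable.tsum_finsetSum fun _ _ => ENNReal.summable
    _ ≤ ∑ _p ∈ (Finset.univ : Finset (Fin (m + 2))).offDiag,
          ENNReal.ofReal (N ^ 2) * ENNReal.ofReal (Z * N) ^ m := by
        refine Finset.sum_le_sum fun p hp => tsum_sumEq_prod_le s (F p)
          (Finset.mem_offDiag.mp hp).2.2 (by simpa [F] using hA) fun l hl₁ hl₂ => ?_
        simpa [F, hl₁, hl₂] using hB
    _ = _ := by
        rw [Finset.sum_const, Finset.offDiag_card, Finset.card_univ, Fintype.card_fin,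
          nsmul_eq_mul, ← ENNReal.ofReal_pow (by positivity), ← ENNReal.ofReal_mul (by positivity),
          ← ENNReal.ofReal_natCast, ← ENNReal.ofReal_mul (by positivity)]
        congr 1
        rw [Nat.cast_sub (Nat.le_mul_self _)]
        push_cast
        ring

theorem summable_and_tsum_le_of_tsum_ofReal_le {α : Type*} {g : α → ℝ} (hg : ∀ a, 0 ≤ g a)
    {M : ℝ} (hM : 0 ≤ M) (h : ∑' a, ENNReal.ofReal (g a) ≤ ENNReal.ofReal M) :
    Summable g ∧ ∑' a, g a ≤ M := by
  have hs : Summable g := by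
    simpa [ENNReal.toReal_ofReal (hg _)] using
      ENNReal.summable_toReal (ne_top_of_le_ne_top ENNReal.ofReal_ne_top h)
  refine ⟨hs, ?_⟩
  rwa [← ENNReal.ofReal_le_ofReal_iff hM, ENNReal.ofReal_tsum_of_nonneg hg hs]

def absIcoefTerm (n : ℕ) (k : Z0) (v : Z0 → ℂ) (a : Tup n k) : ℝ :=
  |((Phi n fun j => (a.1 j).1 : ℤ) : ℝ)| * ∏ j, ‖v (a.1 j)‖ / |((a.1 j).1 : ℝ)|

theorem summable_and_tsum_absIcoefTerm_le (v : Z0 → ℂ)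
    (hv2 : Summable fun x : Z0 => ‖v x‖ ^ 2) (m : ℕ) (k : Z0) :
    Summable (absIcoefTerm (m + 2) k v) ∧ ∑' a, absIcoefTerm (m + 2) k v a ≤
      (m + 2) * (m + 1) * √(π ^ 2 / 3) ^ m * √(∑' x : Z0, ‖v x‖ ^ 2) ^ (m + 2) := by
  set u : ℤ → ℝ := Function.extend Subtype.val (fun x : Z0 => ‖v x‖) 0
  have huv (x : Z0) : u x.1 = ‖v x‖ := Subtype.val_injective.extend_apply _ _ _
  have hu0 : u 0 = 0 := Function.extend_apply' _ _ _ fun ⟨x, hx⟩ => x.2 hx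
  have hu (x : ℤ) : 0 ≤ u x := by
    rcases eq_or_ne x 0 with rfl | hx
    · exact hu0.ge
    · exact (huv ⟨x, hx⟩).trans_ge (norm_nonneg _)
  have hu2eq : (fun x => u x ^ 2) = Function.extend Subtype.val (fun x : Z0 => ‖v x‖ ^ 2) 0 := by
    funext x
    rw [Function.apply_extend (· ^ 2)]
    congr 1
    funext x
    simp
  have hu2 : Summable fun x => u x ^ 2 := by
    rw [hu2eq]
    exact (summable_extend_zero Subtype.val_injective).mpr hv2
  let ι (a : Tup (m + 2) k) : {a : Fin (m + 2) → ℤ // ∑ l, a l = k.1} := ⟨fun l => (a.1 l).1, a.2⟩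
  have hι : Function.Injective ι := fun a b hab =>
    Subtype.ext <| funext fun l => Subtype.ext <| congrFun (congrArg Subtype.val hab) l
  refine summable_and_tsum_le_of_tsum_ofReal_le
    (fun a => mul_nonneg (abs_nonneg _) (Finset.prod_nonneg fun j _ => by positivity))
    (by positivity) ?_
  calc _ = ∑' a : Tup (m + 2) k, ENNReal.ofReal
        (|(Phi (m + 2) (ι a).1 : ℝ)| * ∏ l, u ((ι a).1 l) * |((ι a).1 l : ℝ)|⁻¹) := by
        simp [ι, huv, div_eq_mul_inv]
    _ ≤ ∑' a : {a : Fin (m + 2) → ℤ // ∑ l, a l = k.1}, ENNReal.ofReal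
        (|(Phi (m + 2) a.1 : ℝ)| * ∏ l, u (a.1 l) * |(a.1 l : ℝ)|⁻¹) :=
        ENNReal.tsum_comp_le_tsum_of_injective hι _
    _ ≤ _ := by
        simpa [hu2eq, tsum_extend_zero] using tsum_ofReal_abs_Phi_mul_prod_le hu hu0 hu2 m k.1

theorem norm_Icoef_le {n : ℕ} {k : Z0} {t : ℝ} {v : Z0 → ℂ} {M : ℝ}
    (hs : Summable (absIcoefTerm n k v)) (hM : ∑' a, absIcoefTerm n k v a ≤ M) :
    ‖Icoef n k t v‖ ≤ |(k.1 : ℝ)| / (2 ^ (n - 1) * n.factorial) * M := by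
  have hterm (a : Tup n k) :
      ‖I * ((Phi n fun j => (a.1 j).1 : ℤ) : ℂ) *
          exp (I * ((Phi n fun j => (a.1 j).1 : ℤ) : ℂ) * t) * ∏ j, v (a.1 j) / ((a.1 j).1 : ℂ)‖ =
        absIcoefTerm n k v a := by
    have hexp : I * ((Phi n fun j => (a.1 j).1 : ℤ) : ℂ) * t =
        (((Phi n fun j => (a.1 j).1 : ℤ) * t : ℝ) : ℂ) * I := by
      push_cast; ring
    rw [norm_mul, norm_mul, norm_mul, hexp, norm_exp_ofReal_mul_I, norm_I, norm_prod]
    simp [absIcoefTerm]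
  rw [Icoef, norm_mul]
  gcongr
  · simp
  · refine (norm_tsum_le_tsum_norm ?_).trans ?_ <;> simp only [hterm]
    exacts [hs, hM]

theorem norm_Icoef_add_two_le (v : Z0 → ℂ) (hv2 : Summable fun x : Z0 => ‖v x‖ ^ 2) (m : ℕ)
    (k : Z0) (t : ℝ) :
    ‖Icoef (m + 2) k t v‖ ≤ |(k.1 : ℝ)| * √(π ^ 2 / 3) ^ m * √(∑' x : Z0, ‖v x‖ ^ 2) ^ (m + 2) /
      (2 ^ (m + 1) * m.factorial) := by
  obtain ⟨hs, hM⟩ := summable_and_tsum_absIcoefTerm_le v hv2 m k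
  have hfact : ((m + 2).factorial : ℝ) = (m + 2) * (m + 1) * m.factorial := by
    push_cast [Nat.factorial_succ]; ring
  refine (norm_Icoef_le hs hM).trans_eq ?_
  rw [show m + 2 - 1 = m + 1 from rfl, hfact]
  field_simp

theorem tendsto_mul_pow_mul_pow_div_factorial (K Z C : ℝ) :
    Filter.Tendsto (fun n : ℕ => K * Z ^ (n - 2) * C ^ n / (2 ^ (n - 1) * (n - 2).factorial))
      Filter.atTop (nhds 0) := by
  rw [← Filter.tendsto_add_atTop_iff_nat 2]
  have := (FloorSemiring.tendsto_pow_div_factorial_atTop (Z * C / 2)).const_mul (K * C ^ 2 / 2)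
  rw [mul_zero] at this
  refine this.congr fun m => ?_
  simp only [Nat.add_sub_cancel, show m + 2 - 1 = m + 1 from rfl, div_pow]
  field_simp
  ring

theorem Icoef_bound_general (t : ℝ) (k : Z0) (C₀ : ℝ)
    (v : Z0 → ℂ)
    (hv2 : Summable (fun m : Z0 => ‖v m‖ ^ 2))
    (hv : Real.sqrt (∑' m : Z0, ‖v m‖ ^ 2) ≤ C₀) :
    (∀ n : ℕ, 2 ≤ n →
      Summable (fun a : Tup n k =>
        |((Phi n fun j => (a.1 j).1 : ℤ) : ℝ)| *
          ∏ j, ‖v (a.1 j)‖ / |((a.1 j).1 : ℝ)|) ∧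
      ‖Icoef n k t v‖ ≤
        |(k.1 : ℝ)| * Real.sqrt (Real.pi ^ 2 / 3) ^ (n - 2) * C₀ ^ n /
          (2 ^ (n - 1) * (Nat.factorial (n - 2)))) ∧
    Filter.Tendsto (fun n : ℕ => Icoef n k t v) Filter.atTop (nhds 0) := by
  have hbound (n : ℕ) (hn : 2 ≤ n) : ‖Icoef n k t v‖ ≤
      |(k.1 : ℝ)| * √(π ^ 2 / 3) ^ (n - 2) * C₀ ^ n / (2 ^ (n - 1) * (n - 2).factorial) := by
    obtain ⟨m, rfl⟩ := Nat.exists_eq_add_of_le' hn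
    simp only [Nat.add_sub_cancel, show m + 2 - 1 = m + 1 from rfl]
    exact (norm_Icoef_add_two_le v hv2 m k t).trans (by gcongr)
  refine ⟨fun n hn => ⟨?_, hbound n hn⟩,
    squeeze_zero_norm' ?_ (tendsto_mul_pow_mul_pow_div_factorial |(k.1 : ℝ)| √(π ^ 2 / 3) C₀)⟩
  · obtain ⟨m, rfl⟩ := Nat.exists_eq_add_of_le' hn
    exact (summable_and_tsum_absIcoefTerm_le v hv2 m k).1
  · filter_upwards [Filter.eventually_ge_atTop 2] with n hn using hbound n hn

/-- Bound on the non-resonant multilinear form `I^n_k(t)(v)` for `v` in the `C₀`-ball of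
`ℓ²(ℤ₀)`: for every `n ≥ 2` the defining sum converges absolutely and
`|I^n_k(t)(v)| ≤ |k| Z_{0,2}^{n-2} C₀^n / (2^{n-1}(n-2)!)`, where `Z_{0,2} = (π²/3)^{1/2}`.
In particular `I^n_k(t)(v) → 0` as `n → ∞`. -/
theorem Icoef_bound (t : ℝ) (k : Z0) (C₀ : ℝ) (hC₀ : 0 < C₀)
    (v : Z0 → ℂ)
    (hv2 : Summable (fun m : Z0 => ‖v m‖ ^ 2))
    (hv : Real.sqrt (∑' m : Z0, ‖v m‖ ^ 2) ≤ C₀) :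
    (∀ n : ℕ, 2 ≤ n →
      Summable (fun a : Tup n k =>
        |((Phi n fun j => (a.1 j).1 : ℤ) : ℝ)| *
          ∏ j, ‖v (a.1 j)‖ / |((a.1 j).1 : ℝ)|) ∧
      ‖Icoef n k t v‖ ≤
        |(k.1 : ℝ)| * Real.sqrt (Real.pi ^ 2 / 3) ^ (n - 2) * C₀ ^ n /
          (2 ^ (n - 1) * (Nat.factorial (n - 2)))) ∧
    Filter.Tendsto (fun n : ℕ => Icoef n k t v) Filter.atTop (nhds 0) :=
  Icoef_bound_general t k C₀ v hv2 hv
end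
end

section
/- Assume (s,p) satisfies either (s > −1/p and p > 1) or (s ≥ −1 and p = 1). Then for every integer n ≥ 2, every t ∈ ℝ, and every v : ℤ₀ → ℂ with ‖v‖_{FL^{s,p}} < ∞, one has ‖N^n(t)(v)‖_{FL^{s,p}} ≤ C_s(n) · Z_{s,p}^{n−1} / (2^{n−1}(n−1)!) · ‖v‖_{FL^{s,p}}^n, where C_s(n) = 1 if s ≤ 0 and C_s(n) = n^s if s > 0. -/
noncomputable section

open scoped BigOperators
open Complex

/-- the constant `Z_{s,p}`: `(Σ_{k≠0} |k|^{-(s+1)p'})^{1/p'}` for `p > 1`, and `1` for `p = 1`. -/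
def Zsp (s p : ℝ) : ℝ :=
  if p = 1 then 1
  else (∑' k : Z0, |(k.1 : ℝ)| ^ (-((s + 1) * (p / (p - 1))))) ^ ((p - 1) / p)

/-- the constant `C_s(n)`. -/
def Cs (s : ℝ) (n : ℕ) : ℝ := if s ≤ 0 then 1 else (n : ℝ) ^ s

open scoped ENNReal

/-!
Put `F m = |m|^s |v_m|`, so that `‖F‖_{ℓ^p} = ‖v‖_{FL^{s,p}}`, and `G m = |v_m| / |m|`.
Taking absolute values inside the sum, `|k|^s |N^n_k| ≤ |k|^{s+1} / (2^{n-1} n!) · (G ∗ ⋯ ∗ G)(k)`.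
On `k = a₁ + ⋯ + aₙ` one has `|k|^{s+1} ≤ C_s(n) Σ_j |a_j|^{s+1}` (subadditivity of `x ↦ x^{s+1}`
when `s ≤ 0`, the power-mean inequality when `s > 0`) and `|a_j|^{s+1} G(a_j) = F(a_j)`; the `n`
resulting convolutions agree by symmetry, whence
`|k|^s |N^n_k| ≤ C_s(n) / (2^{n-1} (n-1)!) · (F ∗ G ∗ ⋯ ∗ G)(k)`.
Young's inequality `ℓ^p ∗ ℓ^1 ⊆ ℓ^p` bounds the right side in `ℓ^p` by `‖F‖_p ‖G‖_1^{n-1}`, and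
Hölder's inequality gives `‖G‖_1 ≤ Z_{s,p} ‖F‖_p` (for `p = 1` simply `G ≤ F`, as `s ≥ -1`).
-/

namespace ENNReal

variable {ι : Type*}

theorem inner_le_Lp_mul_Lq_tsum (f g : ι → ℝ≥0∞) {p q : ℝ} (hpq : p.HolderConjugate q) :
    ∑' i, f i * g i ≤ (∑' i, f i ^ p) ^ (1 / p) * (∑' i, g i ^ q) ^ (1 / q) := by
  rw [ENNReal.tsum_eq_iSup_sum]
  refine iSup_le fun s => (inner_le_Lp_mul_Lq s f g hpq).trans ?_
  gcongr
  · exact hpq.one_div_nonneg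
  · exact ENNReal.sum_le_tsum s
  · exact hpq.symm.one_div_nonneg
  · exact ENNReal.sum_le_tsum s

theorem rpow_inner_le_weight_mul_Lp_tsum (w f : ι → ℝ≥0∞) {p : ℝ} (hp : 1 ≤ p) :
    (∑' i, w i * f i) ^ p ≤ (∑' i, w i) ^ (p - 1) * ∑' i, w i * f i ^ p := by
  have hp₀ : 0 < p := by linarith
  have holder : ∑' i, w i * f i ≤
      (∑' i, w i) ^ (1 - p⁻¹) * (∑' i, w i * f i ^ p) ^ p⁻¹ := by
    rw [ENNReal.tsum_eq_iSup_sum]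
    refine iSup_le fun s => (inner_le_weight_mul_Lp_of_nonneg s hp w f).trans ?_
    have : p⁻¹ ≤ 1 := inv_le_one_of_one_le₀ hp
    gcongr <;> exact ENNReal.sum_le_tsum s
  calc (∑' i, w i * f i) ^ p
      ≤ ((∑' i, w i) ^ (1 - p⁻¹) * (∑' i, w i * f i ^ p) ^ p⁻¹) ^ p :=
        rpow_le_rpow holder hp₀.le
    _ = (∑' i, w i) ^ (p - 1) * ∑' i, w i * f i ^ p := by
        rw [mul_rpow_of_nonneg _ _ hp₀.le, ← rpow_mul, ← rpow_mul, inv_mul_cancel₀ hp₀.ne',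
          rpow_one, sub_mul, one_mul, inv_mul_cancel₀ hp₀.ne']

theorem rpow_sum_le_sum_rpow {s : Finset ι} (hs : s.Nonempty) (x : ι → ℝ≥0∞) {r : ℝ}
    (hr₀ : 0 ≤ r) (hr₁ : r ≤ 1) : (∑ i ∈ s, x i) ^ r ≤ ∑ i ∈ s, x i ^ r := by
  induction hs using Finset.Nonempty.cons_induction with
  | singleton a => simp
  | cons a s ha _ ih =>
    rw [Finset.sum_cons, Finset.sum_cons]
    exact (rpow_add_le_add_rpow _ _ hr₀ hr₁).trans (by gcongr)

end ENNReal

theorem rpow_sum_le_Cs_mul_sum_rpow {s : ℝ} (hs : -1 ≤ s) {n : ℕ} (hn : n ≠ 0)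
    (x : Fin n → ℝ≥0∞) : (∑ j, x j) ^ (s + 1) ≤ ENNReal.ofReal (Cs s n) * ∑ j, x j ^ (s + 1) := by
  by_cases hs₀ : s ≤ 0
  · have : Nonempty (Fin n) := Fin.pos_iff_nonempty.mp (Nat.pos_of_ne_zero hn)
    rw [Cs, if_pos hs₀, ENNReal.ofReal_one, one_mul]
    exact ENNReal.rpow_sum_le_sum_rpow Finset.univ_nonempty x (by linarith) (by linarith)
  · rw [Cs, if_neg hs₀, ← ENNReal.ofReal_rpow_of_nonneg n.cast_nonneg (by linarith),
      ENNReal.ofReal_natCast]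
    simpa using ENNReal.rpow_sum_le_const_mul_sum_rpow Finset.univ x (by linarith : 1 ≤ s + 1)

theorem Z0.one_le_abs (m : Z0) : (1 : ℝ) ≤ |(m.1 : ℝ)| := by
  exact_mod_cast Int.one_le_abs m.2

theorem Z0.abs_pos (m : Z0) : (0 : ℝ) < |(m.1 : ℝ)| := one_pos.trans_le m.one_le_abs

-- `Tup n k` with a prescribed sum `c` that may vanish, as happens in partial convolutions.
abbrev TupSum (n : ℕ) (c : ℤ) : Type := {a : Fin n → Z0 // ∑ j, (a j).1 = c}

def TupSum.consEquiv (n : ℕ) (c : ℤ) : (Σ l : Z0, TupSum n (c - l.1)) ≃ TupSum (n + 1) c where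
  toFun x := ⟨Fin.cons x.1 x.2.1, by rw [Fin.sum_univ_succ]; simp [x.2.2]⟩
  invFun a := ⟨a.1 0, Fin.tail a.1, by
    rw [eq_sub_iff_add_eq']
    exact (Fin.sum_univ_succ fun j => (a.1 j).1).symm.trans a.2⟩
  left_inv _ := rfl
  right_inv a := Subtype.ext (Fin.cons_self_tail a.1)

def TupSum.permEquiv {n : ℕ} (σ : Equiv.Perm (Fin n)) (c : ℤ) : TupSum n c ≃ TupSum n c :=
  (σ.symm.arrowCongr (Equiv.refl Z0)).subtypeEquiv fun a => by
    simp [Equiv.sum_comp σ (fun j => ((a j).1 : ℤ))]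

def multiConv {n : ℕ} (f : Fin n → Z0 → ℝ≥0∞) (c : ℤ) : ℝ≥0∞ :=
  ∑' a : TupSum n c, ∏ i, f i (a.1 i)

theorem multiConv_comp_perm {n : ℕ} (f : Fin n → Z0 → ℝ≥0∞) (σ : Equiv.Perm (Fin n)) (c : ℤ) :
    multiConv (f ∘ σ) c = multiConv f c := by
  rw [multiConv, multiConv, ← (TupSum.permEquiv σ c).tsum_eq]
  refine tsum_congr fun a => ?_
  exact Equiv.prod_comp σ fun i => f i (a.1 i)

theorem multiConv_update_const {n : ℕ} (G F : Z0 → ℝ≥0∞) (j : Fin (n + 1)) (c : ℤ) :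
    multiConv (Function.update (fun _ : Fin (n + 1) => G) j F) c =
      multiConv (Function.update (fun _ : Fin (n + 1) => G) 0 F) c := by
  rw [← multiConv_comp_perm _ (Equiv.swap 0 j), Function.update_comp_equiv, Equiv.symm_swap,
    Equiv.swap_apply_right]
  rfl

theorem multiConv_cons {n : ℕ} (g : Z0 → ℝ≥0∞) (f : Fin n → Z0 → ℝ≥0∞) (c : ℤ) :
    multiConv (Fin.cons g f : Fin (n + 1) → Z0 → ℝ≥0∞) c = ∑' l, g l * multiConv f (c - l.1) := by
  rw [multiConv, ← (TupSum.consEquiv n c).tsum_eq, ENNReal.tsum_sigma']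
  refine tsum_congr fun l => ?_
  rw [multiConv, ← ENNReal.tsum_mul_left]
  refine tsum_congr fun b => ?_
  rw [Fin.prod_univ_succ]
  rfl

theorem tsum_multiConv {n : ℕ} (f : Fin n → Z0 → ℝ≥0∞) :
    ∑' c, multiConv f c = ∏ i, ∑' m, f i m := by
  induction n with
  | zero =>
    simp only [multiConv, Finset.univ_eq_empty, Finset.prod_empty]
    rw [← ENNReal.tsum_sigma' (β := fun c => TupSum 0 c) (fun _ => 1)]
    rw [(Equiv.sigmaFiberEquiv fun a : Fin 0 → Z0 => ∑ j, (a j).1).tsum_eq (fun _ => 1)]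
    simp
  | succ n ih =>
    obtain ⟨g, f, rfl⟩ : ∃ g f', f = Fin.cons g f' := ⟨f 0, Fin.tail f, (Fin.cons_self_tail f).symm⟩
    simp_rw [multiConv_cons, Fin.prod_univ_succ, Fin.cons_zero, Fin.cons_succ, ← ih]
    rw [ENNReal.tsum_comm, ← ENNReal.tsum_mul_right]
    refine tsum_congr fun l => ?_
    rw [ENNReal.tsum_mul_left]
    exact congrArg _ ((Equiv.subRight l.1).tsum_eq (multiConv f))

theorem tsum_conv_rpow_le (F : Z0 → ℝ≥0∞) (H : ℤ → ℝ≥0∞) {p : ℝ} (hp : 1 ≤ p) :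
    ∑' c, (∑' l, F l * H (c - l.1)) ^ p ≤ (∑' l, F l ^ p) * (∑' c, H c) ^ p := by
  have mass_le (c : ℤ) : ∑' l : Z0, H (c - l.1) ≤ ∑' d, H d :=
    ENNReal.tsum_comp_le_tsum_of_injective (fun l l' h => Subtype.ext (by simpa using h)) H
  calc ∑' c, (∑' l, F l * H (c - l.1)) ^ p
      = ∑' c, (∑' l, H (c - l.1) * F l) ^ p := by simp_rw [mul_comm (F _)]
    _ ≤ ∑' c, (∑' d, H d) ^ (p - 1) * ∑' l, H (c - l.1) * F l ^ p := by
        refine ENNReal.tsum_le_tsum fun c =>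
          (ENNReal.rpow_inner_le_weight_mul_Lp_tsum _ _ hp).trans ?_
        gcongr
        exact mass_le c
    _ = (∑' d, H d) ^ (p - 1) * ∑' l, F l ^ p * ∑' c, H (c - l.1) := by
        rw [ENNReal.tsum_mul_left, ENNReal.tsum_comm]
        simp_rw [← ENNReal.tsum_mul_left, mul_comm (H _)]
    _ = (∑' l, F l ^ p) * (∑' c, H c) ^ p := by
        have shift (l : ℤ) : ∑' c, H (c - l) = ∑' c, H c := (Equiv.subRight l).tsum_eq H
        have hpow := ENNReal.rpow_add_of_nonneg (x := ∑' c, H c) _ 1 (by linarith : 0 ≤ p - 1)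
          zero_le_one
        rw [sub_add_cancel, ENNReal.rpow_one] at hpow
        simp_rw [shift, ENNReal.tsum_mul_right, hpow]
        ring

theorem tsum_multiConv_rpow_le {n : ℕ} (f : Fin (n + 1) → Z0 → ℝ≥0∞) {p : ℝ} (hp : 1 ≤ p) :
    ∑' c, multiConv f c ^ p ≤ (∑' m, f 0 m ^ p) * (∏ i : Fin n, ∑' m, f i.succ m) ^ p := by
  obtain ⟨g, f, rfl⟩ : ∃ g f', f = Fin.cons g f' := ⟨f 0, Fin.tail f, (Fin.cons_self_tail f).symm⟩
  simp_rw [multiConv_cons, Fin.cons_zero, Fin.cons_succ, ← tsum_multiConv]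
  exact tsum_conv_rpow_le g (multiConv f) hp

def FLAdmissible (s p : ℝ) : Prop := (-1 / p < s ∧ 1 < p) ∨ (-1 ≤ s ∧ p = 1)

namespace FLAdmissible

variable {s p : ℝ}

theorem one_le (h : FLAdmissible s p) : 1 ≤ p := by
  rcases h with ⟨_, hp⟩ | ⟨_, rfl⟩
  exacts [hp.le, le_rfl]

theorem neg_one_le (h : FLAdmissible s p) : -1 ≤ s := by
  rcases h with ⟨hs, hp⟩ | ⟨hs, _⟩
  · have : -1 < -1 / p := by rw [lt_div_iff₀ (by linarith)]; linarith
    linarith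
  · exact hs

end FLAdmissible

def scaledNorm (s : ℝ) (v : Z0 → ℂ) (m : Z0) : ℝ≥0∞ :=
  ENNReal.ofReal (|(m.1 : ℝ)| ^ s * ‖v m‖)

-- `FLnorm` computed in `ℝ≥0∞`, where a divergent series gives `∞` instead of the junk `tsum`.
def FLenorm (s p : ℝ) (v : Z0 → ℂ) : ℝ≥0∞ :=
  (∑' k, scaledNorm s v k ^ p) ^ (1 / p)

theorem scaledNorm_add (a b : ℝ) (v : Z0 → ℂ) (m : Z0) :
    scaledNorm (a + b) v m = ENNReal.ofReal (|(m.1 : ℝ)| ^ a) * scaledNorm b v m := by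
  rw [scaledNorm, scaledNorm, ← ENNReal.ofReal_mul (by positivity), Real.rpow_add m.abs_pos,
    mul_assoc]

theorem Cs_nonneg (s : ℝ) (n : ℕ) : 0 ≤ Cs s n := by
  unfold Cs; split_ifs <;> positivity

theorem Zsp_nonneg (s p : ℝ) : 0 ≤ Zsp s p := by
  unfold Zsp; split_ifs
  · exact zero_le_one
  · exact Real.rpow_nonneg (tsum_nonneg fun _ => by positivity) _

theorem FLsummand_nonneg {s p : ℝ} {v : Z0 → ℂ} (k : Z0) : 0 ≤ FLsummand s p v k := by
  unfold FLsummand; positivity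

theorem FLnorm_nonneg (s p : ℝ) (v : Z0 → ℂ) : 0 ≤ FLnorm s p v :=
  Real.rpow_nonneg (tsum_nonneg FLsummand_nonneg) _

section scaledNorm

variable {s p : ℝ} {v : Z0 → ℂ}

theorem ofReal_FLsummand (hp : 0 ≤ p) (k : Z0) :
    ENNReal.ofReal (FLsummand s p v k) = scaledNorm s v k ^ p :=
  (ENNReal.ofReal_rpow_of_nonneg (by positivity) hp).symm

theorem FLenorm_eq_ofReal_FLnorm (hp : 0 ≤ p) (hv : Summable (FLsummand s p v)) :
    FLenorm s p v = ENNReal.ofReal (FLnorm s p v) := by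
  rw [FLenorm, FLnorm,
    ← ENNReal.ofReal_rpow_of_nonneg (tsum_nonneg FLsummand_nonneg) (one_div_nonneg.mpr hp),
    ENNReal.ofReal_tsum_of_nonneg FLsummand_nonneg hv]
  simp_rw [ofReal_FLsummand hp]

theorem summable_and_FLnorm_le_of_FLenorm_le (hp : 0 < p) {B : ℝ} (hB : 0 ≤ B)
    (h : FLenorm s p v ≤ ENNReal.ofReal B) : Summable (FLsummand s p v) ∧ FLnorm s p v ≤ B := by
  have hfin : ∑' k, ENNReal.ofReal (FLsummand s p v k) ≠ ∞ := by
    simp_rw [ofReal_FLsummand hp.le]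
    rw [ne_eq, ← ENNReal.rpow_eq_top_iff_of_pos (one_div_pos.mpr hp)]
    exact ne_top_of_le_ne_top ENNReal.ofReal_ne_top h
  have hsum : Summable (FLsummand s p v) := by
    simpa [ENNReal.toReal_ofReal (FLsummand_nonneg _)] using ENNReal.summable_toReal hfin
  rw [FLenorm_eq_ofReal_FLnorm hp.le hsum, ENNReal.ofReal_le_ofReal_iff hB] at h
  exact ⟨hsum, h⟩

theorem ofReal_Zsp (hp : 1 < p) (hs : -1 / p < s) :
    ENNReal.ofReal (Zsp s p) = (∑' m : Z0, ENNReal.ofReal (|(m.1 : ℝ)| ^ (-(s + 1))) ^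
      p.conjExponent) ^ (1 / p.conjExponent) := by
  have hp₁ : 0 < p - 1 := by linarith
  have hq₀ : 0 < p / (p - 1) := div_pos (by linarith) hp₁
  have hexp : 1 < (s + 1) * (p / (p - 1)) := by
    rw [mul_div_assoc', lt_div_iff₀ hp₁]
    rw [div_lt_iff₀ (by linarith)] at hs
    linarith
  have hsum : Summable fun m : Z0 => |(m.1 : ℝ)| ^ (-((s + 1) * (p / (p - 1)))) :=
    (Real.summable_abs_int_rpow hexp).comp_injective Subtype.val_injective
  have hterm (m : Z0) : ENNReal.ofReal (|(m.1 : ℝ)| ^ (-(s + 1))) ^ (p / (p - 1)) =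
      ENNReal.ofReal (|(m.1 : ℝ)| ^ (-((s + 1) * (p / (p - 1))))) := by
    rw [ENNReal.ofReal_rpow_of_nonneg (by positivity) hq₀.le, ← Real.rpow_mul (abs_nonneg _),
      neg_mul]
  rw [Real.conjExponent, Zsp, if_neg hp.ne', tsum_congr hterm,
    ← ENNReal.ofReal_tsum_of_nonneg (fun m => by positivity) hsum,
    ENNReal.ofReal_rpow_of_nonneg (tsum_nonneg fun m => by positivity) (by positivity),
    one_div_div]

theorem tsum_scaledNorm_neg_one_le (hsp : FLAdmissible s p) :
    ∑' m, scaledNorm (-1) v m ≤ ENNReal.ofReal (Zsp s p) * FLenorm s p v := by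
  rcases hsp with ⟨hs, hp⟩ | ⟨hs, rfl⟩
  · calc ∑' m, scaledNorm (-1) v m
        = ∑' m, ENNReal.ofReal (|(m.1 : ℝ)| ^ (-(s + 1))) * scaledNorm s v m := by
          simp_rw [← scaledNorm_add, show -(s + 1) + s = -1 by ring]
      _ ≤ _ := ENNReal.inner_le_Lp_mul_Lq_tsum _ _ (Real.HolderConjugate.conjExponent hp).symm
      _ = _ := by rw [ofReal_Zsp hp hs, FLenorm]
  · rw [Zsp, if_pos rfl, ENNReal.ofReal_one, one_mul, FLenorm]
    simp only [ENNReal.rpow_one, div_one]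
    refine ENNReal.tsum_le_tsum fun m => ENNReal.ofReal_le_ofReal ?_
    gcongr
    exact m.one_le_abs

end scaledNorm

open Nat in
theorem ofReal_norm_Ncoef_le (n : ℕ) (k : Z0) (t : ℝ) (v : Z0 → ℂ) :
    ENNReal.ofReal ‖Ncoef n k t v‖ ≤ ENNReal.ofReal (|(k.1 : ℝ)| / (2 ^ (n - 1) * n !)) *
      multiConv (fun _ : Fin n => scaledNorm (-1) v) k.1 := by
  have hterm (a : Tup n k) :
      ‖exp (I * ((Phi n fun j => (a.1 j).1 : ℤ) : ℂ) * t) * ∏ j, v (a.1 j) / ((a.1 j).1 : ℂ)‖ₑ =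
        ∏ j, scaledNorm (-1) v (a.1 j) := by
    rw [← ofReal_norm, norm_mul, Complex.norm_exp, norm_prod,
      ENNReal.ofReal_mul (by positivity), ENNReal.ofReal_prod_of_nonneg fun _ _ => by positivity]
    simp [scaledNorm, Real.rpow_neg_one, div_eq_inv_mul]
  rw [Ncoef, norm_mul, ENNReal.ofReal_mul (norm_nonneg _)]
  gcongr
  · simp
  · rw [ofReal_norm]
    exact enorm_tsum_le_tsum_enorm.trans (tsum_congr hterm).le

theorem ofReal_abs_rpow_le_Cs_mul_sum {s : ℝ} (hs : -1 ≤ s) {n : ℕ} (hn : n ≠ 0)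
    (a : Fin n → Z0) {c : ℤ} (ha : ∑ j, (a j).1 = c) :
    ENNReal.ofReal (|(c : ℝ)| ^ (s + 1)) ≤
      ENNReal.ofReal (Cs s n) * ∑ j, ENNReal.ofReal (|((a j).1 : ℝ)| ^ (s + 1)) := by
  have hr : 0 ≤ s + 1 := by linarith
  have htri : |(c : ℝ)| ≤ ∑ j, |((a j).1 : ℝ)| := by
    rw [← ha, Int.cast_sum]
    exact Finset.abs_sum_le_sum_abs _ _
  calc ENNReal.ofReal (|(c : ℝ)| ^ (s + 1))
      ≤ ENNReal.ofReal ((∑ j, |((a j).1 : ℝ)|) ^ (s + 1)) := by gcongr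
    _ = (∑ j, ENNReal.ofReal |((a j).1 : ℝ)|) ^ (s + 1) := by
        rw [← ENNReal.ofReal_rpow_of_nonneg (by positivity) hr,
          ENNReal.ofReal_sum_of_nonneg fun _ _ => abs_nonneg _]
    _ ≤ ENNReal.ofReal (Cs s n) * ∑ j, ENNReal.ofReal |((a j).1 : ℝ)| ^ (s + 1) :=
        rpow_sum_le_Cs_mul_sum_rpow hs hn _
    _ = _ := by simp_rw [ENNReal.ofReal_rpow_of_nonneg (abs_nonneg _) hr]

theorem abs_rpow_mul_multiConv_le {s : ℝ} (hs : -1 ≤ s) (n : ℕ) (v : Z0 → ℂ) (c : ℤ) :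
    ENNReal.ofReal (|(c : ℝ)| ^ (s + 1)) * multiConv (fun _ : Fin (n + 1) => scaledNorm (-1) v) c ≤
      ENNReal.ofReal (Cs s (n + 1)) * (n + 1) *
        multiConv (Function.update (fun _ : Fin (n + 1) => scaledNorm (-1) v) 0 (scaledNorm s v))
          c := by
  set G := scaledNorm (-1) v
  set F := scaledNorm s v
  have hupdate (a : Fin (n + 1) → Z0) (j : Fin (n + 1)) :
      ENNReal.ofReal (|((a j).1 : ℝ)| ^ (s + 1)) * ∏ i, G (a i) =
        ∏ i, Function.update (fun _ : Fin (n + 1) => G) j F i (a i) := by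
    have hF : F (a j) = ENNReal.ofReal (|((a j).1 : ℝ)| ^ (s + 1)) * G (a j) := by
      rw [← scaledNorm_add, add_neg_cancel_right]
    rw [Finset.prod_eq_mul_prod_sdiff_singleton_of_mem (Finset.mem_univ j), ← mul_assoc, ← hF,
      ← Finset.prod_update_of_mem (Finset.mem_univ j)]
    exact Finset.prod_congr rfl fun i _ =>
      (Function.apply_update (fun i (h : Z0 → ℝ≥0∞) => h (a i)) _ j F i).symm
  calc ENNReal.ofReal (|(c : ℝ)| ^ (s + 1)) * multiConv (fun _ : Fin (n + 1) => G) c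
      = ∑' a : TupSum (n + 1) c, ENNReal.ofReal (|(c : ℝ)| ^ (s + 1)) * ∏ i, G (a.1 i) :=
        ENNReal.tsum_mul_left.symm
    _ ≤ ∑' a : TupSum (n + 1) c, ENNReal.ofReal (Cs s (n + 1)) *
          ∑ j, ENNReal.ofReal (|((a.1 j).1 : ℝ)| ^ (s + 1)) * ∏ i, G (a.1 i) := by
        refine ENNReal.tsum_le_tsum fun a => ?_
        rw [← Finset.sum_mul, ← mul_assoc]
        gcongr
        exact ofReal_abs_rpow_le_Cs_mul_sum hs n.succ_ne_zero a.1 a.2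
    _ = ENNReal.ofReal (Cs s (n + 1)) *
          ∑ j, multiConv (Function.update (fun _ : Fin (n + 1) => G) j F) c := by
        simp_rw [hupdate, multiConv]
        rw [ENNReal.tsum_mul_left, Summable.tsum_finsetSum fun _ _ => ENNReal.summable]
    _ = _ := by simp [multiConv_update_const G F _ c, mul_assoc]

open Nat in
theorem scaledNorm_Ncoef_le {s : ℝ} (hs : -1 ≤ s) (n : ℕ) (t : ℝ) (v : Z0 → ℂ) (k : Z0) :
    scaledNorm s (fun k => Ncoef (n + 1) k t v) k ≤
      ENNReal.ofReal (Cs s (n + 1) / (2 ^ n * n !)) *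
        multiConv (Function.update (fun _ : Fin (n + 1) => scaledNorm (-1) v) 0 (scaledNorm s v))
          k.1 := by
  have hconst : ENNReal.ofReal (Cs s (n + 1) / (2 ^ n * n !)) =
      ENNReal.ofReal (2 ^ n * (n + 1)!)⁻¹ * (ENNReal.ofReal (Cs s (n + 1)) * (n + 1)) := by
    have hcast : ((n : ℝ≥0∞) + 1) = ENNReal.ofReal (n + 1) := by
      rw [ENNReal.ofReal_add (by positivity) zero_le_one, ENNReal.ofReal_natCast,
        ENNReal.ofReal_one]
    rw [hcast, ← ENNReal.ofReal_mul (Cs_nonneg s (n + 1)), ← ENNReal.ofReal_mul (by positivity),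
      Nat.factorial_succ]
    congr 1
    push_cast
    field_simp
  calc scaledNorm s (fun k => Ncoef (n + 1) k t v) k
      = ENNReal.ofReal (|(k.1 : ℝ)| ^ s) * ENNReal.ofReal ‖Ncoef (n + 1) k t v‖ :=
        ENNReal.ofReal_mul (by positivity)
    _ ≤ ENNReal.ofReal (|(k.1 : ℝ)| ^ s) * (ENNReal.ofReal (|(k.1 : ℝ)| / (2 ^ n * (n + 1)!)) *
          multiConv (fun _ : Fin (n + 1) => scaledNorm (-1) v) k.1) := by
        gcongr
        exact ofReal_norm_Ncoef_le (n + 1) k t v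
    _ = ENNReal.ofReal (2 ^ n * (n + 1)!)⁻¹ * (ENNReal.ofReal (|(k.1 : ℝ)| ^ (s + 1)) *
          multiConv (fun _ : Fin (n + 1) => scaledNorm (-1) v) k.1) := by
        rw [Real.rpow_add_one k.abs_pos.ne', div_eq_mul_inv, ENNReal.ofReal_mul (abs_nonneg _),
          ENNReal.ofReal_mul (by positivity)]
        ring
    _ ≤ ENNReal.ofReal (2 ^ n * (n + 1)!)⁻¹ * (ENNReal.ofReal (Cs s (n + 1)) * (n + 1) *
          multiConv (Function.update (fun _ : Fin (n + 1) => scaledNorm (-1) v) 0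
            (scaledNorm s v)) k.1) := by
        gcongr _ * ?_
        exact abs_rpow_mul_multiConv_le hs n v k.1
    _ = _ := by rw [hconst]; ring

theorem tsum_multiConv_scaledNorm_rpow_le {s p : ℝ} (hsp : FLAdmissible s p) (n : ℕ)
    (v : Z0 → ℂ) :
    ∑' c, multiConv (Function.update (fun _ : Fin (n + 1) => scaledNorm (-1) v) 0
      (scaledNorm s v)) c ^ p ≤ (ENNReal.ofReal (Zsp s p) ^ n * FLenorm s p v ^ (n + 1)) ^ p := by
  have hp₀ : 0 < p := zero_lt_one.trans_le hsp.one_le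
  set w := Function.update (fun _ : Fin (n + 1) => scaledNorm (-1) v) 0 (scaledNorm s v)
  have hlp : ∑' m, w 0 m ^ p = FLenorm s p v ^ p := by
    rw [FLenorm, one_div, ENNReal.rpow_inv_rpow hp₀.ne']
    simp [w]
  have hl1 : ∏ i : Fin n, ∑' m, w i.succ m ≤ (ENNReal.ofReal (Zsp s p) * FLenorm s p v) ^ n := by
    simp only [w, Function.update_of_ne (Fin.succ_ne_zero _), Finset.prod_const, Finset.card_univ,
      Fintype.card_fin]
    gcongr
    exact tsum_scaledNorm_neg_one_le hsp
  calc ∑' c, multiConv w c ^ p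
      ≤ (∑' m, w 0 m ^ p) * (∏ i : Fin n, ∑' m, w i.succ m) ^ p :=
        tsum_multiConv_rpow_le w hsp.one_le
    _ ≤ FLenorm s p v ^ p * ((ENNReal.ofReal (Zsp s p) * FLenorm s p v) ^ n) ^ p := by
        rw [hlp]
        gcongr
    _ = (ENNReal.ofReal (Zsp s p) ^ n * FLenorm s p v ^ (n + 1)) ^ p := by
        rw [← ENNReal.mul_rpow_of_nonneg _ _ hp₀.le]
        ring_nf

open Nat in
theorem FLenorm_Ncoef_le {s p : ℝ} (hsp : FLAdmissible s p) (n : ℕ) (t : ℝ) (v : Z0 → ℂ) :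
    FLenorm s p (fun k => Ncoef (n + 1) k t v) ≤
      ENNReal.ofReal (Cs s (n + 1) / (2 ^ n * n !)) * ENNReal.ofReal (Zsp s p) ^ n *
        FLenorm s p v ^ (n + 1) := by
  have hp₀ : 0 < p := zero_lt_one.trans_le hsp.one_le
  set D := ENNReal.ofReal (Cs s (n + 1) / (2 ^ n * n !))
  set w := Function.update (fun _ : Fin (n + 1) => scaledNorm (-1) v) 0 (scaledNorm s v)
  set X := D * ENNReal.ofReal (Zsp s p) ^ n * FLenorm s p v ^ (n + 1)
  have key : ∑' k, scaledNorm s (fun k => Ncoef (n + 1) k t v) k ^ p ≤ X ^ p := by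
    calc ∑' k, scaledNorm s (fun k => Ncoef (n + 1) k t v) k ^ p
        ≤ ∑' k : Z0, (D * multiConv w k.1) ^ p := by
          gcongr with k
          exact scaledNorm_Ncoef_le hsp.neg_one_le n t v k
      _ = D ^ p * ∑' k : Z0, multiConv w k.1 ^ p := by
          simp_rw [ENNReal.mul_rpow_of_nonneg _ _ hp₀.le, ENNReal.tsum_mul_left]
      _ ≤ D ^ p * ∑' c, multiConv w c ^ p := by
          gcongr
          exact ENNReal.tsum_comp_le_tsum_of_injective Subtype.val_injective _
      _ ≤ D ^ p * (ENNReal.ofReal (Zsp s p) ^ n * FLenorm s p v ^ (n + 1)) ^ p := by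
          gcongr
          exact tsum_multiConv_scaledNorm_rpow_le hsp n v
      _ = X ^ p := by
          rw [← ENNReal.mul_rpow_of_nonneg _ _ hp₀.le, ← mul_assoc]
  calc FLenorm s p (fun k => Ncoef (n + 1) k t v)
      ≤ (X ^ p) ^ (1 / p) := by
        rw [FLenorm]
        gcongr
    _ = X := by rw [one_div, ENNReal.rpow_rpow_inv hp₀.ne']

/-- Multilinear estimate for `N^n(t)(v)` in `FL^{s,p}`:
`‖N^n(t)(v)‖_{FL^{s,p}} ≤ C_s(n) Z_{s,p}^{n-1} / (2^{n-1}(n-1)!) ‖v‖_{FL^{s,p}}^n`. -/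
theorem Ncoef_FL_bound (s p : ℝ)
    (hsp : (-1 / p < s ∧ 1 < p) ∨ (-1 ≤ s ∧ p = 1))
    (n : ℕ) (hn : 2 ≤ n) (t : ℝ) (v : Z0 → ℂ)
    (hv : Summable (FLsummand s p v)) :
    Summable (FLsummand s p (fun k => Ncoef n k t v)) ∧
    FLnorm s p (fun k => Ncoef n k t v) ≤
      Cs s n * Zsp s p ^ (n - 1) / (2 ^ (n - 1) * (Nat.factorial (n - 1))) *
        FLnorm s p v ^ n := by
  obtain ⟨n, rfl⟩ : ∃ m, n = m + 1 := ⟨n - 1, by omega⟩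
  have hp₀ : 0 < p := zero_lt_one.trans_le (FLAdmissible.one_le hsp)
  have hD : 0 ≤ Cs s (n + 1) / (2 ^ n * n.factorial) :=
    div_nonneg (Cs_nonneg s (n + 1)) (by positivity)
  have hDZ : 0 ≤ Cs s (n + 1) / (2 ^ n * n.factorial) * Zsp s p ^ n :=
    mul_nonneg hD (pow_nonneg (Zsp_nonneg s p) n)
  rw [Nat.add_sub_cancel, mul_div_right_comm]
  refine summable_and_FLnorm_le_of_FLenorm_le hp₀
    (mul_nonneg hDZ (pow_nonneg (FLnorm_nonneg s p v) _)) ((FLenorm_Ncoef_le hsp n t v).trans_eq ?_)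
  rw [FLenorm_eq_ofReal_FLnorm hp₀.le hv, ENNReal.ofReal_mul hDZ, ENNReal.ofReal_mul hD,
    ENNReal.ofReal_pow (Zsp_nonneg s p), ENNReal.ofReal_pow (FLnorm_nonneg s p v)]
end
end

section
/- Let J : ℝ → ℂ be continuous and 2π-periodic, and suppose M := sup_{x∈ℝ}|J(x)| satisfies 0 ≤ M < π. Then the zeroth Fourier coefficient of exp(−(i/2)J) satisfies the lower bound |(1/2π)∫₀^{2π} exp(−(i/2)J(x)) dx| ≥ e^{−M/2}·cos(M/2), and this lower bound is strictly positive. -/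
/-!
Write `-(i/2) J(x) = log r(x) + i θ(x)`. Since `|J| ≤ M < π`, `r ≥ e^{-M/2}` and `|θ| ≤ M/2 < π/2`,
so the real part `r cos θ` of the integrand is at least `e^{-M/2} cos(M/2) > 0` everywhere.
The mean over a period of the real part bounds the real part, hence the modulus, of the mean.
-/

open Complex Real MeasureTheory

theorem Complex.exp_neg_mul_cos_le_re_exp {z : ℂ} {R : ℝ} (hz : ‖z‖ ≤ R) (hR : R ≤ π / 2) :
    Real.exp (-R) * Real.cos R ≤ (Complex.exp z).re := by
  have hre : -R ≤ z.re := (abs_le.1 ((abs_re_le_norm z).trans hz)).1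
  have him : |z.im| ≤ R := (abs_im_le_norm z).trans hz
  have hcos : Real.cos R ≤ Real.cos z.im := by
    rw [← Real.cos_abs z.im]
    exact Real.cos_le_cos_of_nonneg_of_le_pi (abs_nonneg _) (by linarith [pi_pos]) him
  have hcos_nonneg : 0 ≤ Real.cos R :=
    Real.cos_nonneg_of_mem_Icc ⟨by linarith [abs_nonneg z.im], hR⟩
  rw [exp_re]
  exact mul_le_mul (Real.exp_le_exp.2 hre) hcos hcos_nonneg (Real.exp_pos _).le

theorem intervalIntegral.sub_mul_le_re_integral {f : ℝ → ℂ} {a b c : ℝ} (hab : a ≤ b)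
    (hf : IntervalIntegrable f volume a b) (h : ∀ x ∈ Set.Icc a b, c ≤ (f x).re) :
    (b - a) * c ≤ (∫ x in a..b, f x).re := by
  have hre : (∫ x in a..b, f x).re = ∫ x in a..b, (f x).re := (intervalIntegral_re hf).symm
  rw [hre, ← smul_eq_mul, ← intervalIntegral.integral_const]
  exact intervalIntegral.integral_mono_on hab intervalIntegrable_const ⟨hf.1.re, hf.2.re⟩ h

theorem intervalIntegral.le_norm_inv_sub_mul_integral {f : ℝ → ℂ} {a b c : ℝ} (hab : a < b)
    (hf : IntervalIntegrable f volume a b) (h : ∀ x ∈ Set.Icc a b, c ≤ (f x).re) :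
    c ≤ ‖((b - a : ℝ) : ℂ)⁻¹ * ∫ x in a..b, f x‖ := by
  have hba : 0 < b - a := sub_pos.2 hab
  have hint := (sub_mul_le_re_integral hab.le hf h).trans (re_le_norm _)
  rw [norm_mul, norm_inv, norm_real, Real.norm_of_nonneg hba.le]
  rwa [le_inv_mul_iff₀ hba]

theorem coleHopf_zeroth_coefficient_lower_bound_general
    (J : ℝ → ℂ) (hJc : Continuous J)
    (M : ℝ) (hM0 : 0 ≤ M) (hMπ : M < π)
    (hMsup : ∀ x : ℝ, ‖J x‖ ≤ M) :
    0 < Real.exp (-M / 2) * Real.cos (M / 2) ∧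
    Real.exp (-M / 2) * Real.cos (M / 2) ≤
      ‖((2 * Real.pi : ℝ) : ℂ)⁻¹ *
        ∫ x in (0 : ℝ)..(2 * Real.pi), Complex.exp (-(Complex.I / 2) * J x)‖ := by
  refine ⟨mul_pos (Real.exp_pos _) (Real.cos_pos_of_mem_Ioo ⟨by linarith, by linarith⟩), ?_⟩
  have hpointwise (x : ℝ) :
      Real.exp (-M / 2) * Real.cos (M / 2) ≤ (Complex.exp (-(Complex.I / 2) * J x)).re := by
    rw [neg_div]
    refine Complex.exp_neg_mul_cos_le_re_exp ?_ (by linarith)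
    rw [norm_mul, norm_neg, norm_div, norm_I, RCLike.norm_ofNat]
    linarith [hMsup x]
  have hint : IntervalIntegrable (fun x ↦ Complex.exp (-(Complex.I / 2) * J x)) volume 0 (2 * π) :=
    (by fun_prop : Continuous fun x ↦ Complex.exp (-(Complex.I / 2) * J x)).intervalIntegrable _ _
  simpa only [sub_zero] using
    intervalIntegral.le_norm_inv_sub_mul_integral (by positivity) hint fun x _ ↦ hpointwise x

/-- Lower bound on the zeroth Fourier coefficient of `exp(−(i/2)J)`: if `J` is continuous,
`2π`-periodic and `|J(x)| ≤ M` with `0 ≤ M < π`, then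
`|(1/2π)∫₀^{2π} exp(−(i/2)J(x))dx| ≥ e^{−M/2} cos(M/2) > 0`. -/
theorem coleHopf_zeroth_coefficient_lower_bound
    (J : ℝ → ℂ) (hJc : Continuous J)
    (hJper : ∀ x : ℝ, J (x + 2 * π) = J x)
    (M : ℝ) (hM0 : 0 ≤ M) (hMπ : M < π)
    (hMsup : ∀ x : ℝ, ‖J x‖ ≤ M) :
    0 < Real.exp (-M / 2) * Real.cos (M / 2) ∧
    Real.exp (-M / 2) * Real.cos (M / 2) ≤
      ‖((2 * Real.pi : ℝ) : ℂ)⁻¹ *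
        ∫ x in (0 : ℝ)..(2 * Real.pi), Complex.exp (-(Complex.I / 2) * J x)‖ :=
  coleHopf_zeroth_coefficient_lower_bound_general J hJc M hM0 hMπ hMsup
end
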